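/- arXiv:1906.00053 — 2 statements merged into one kernel-verified Lean document; each statement's English description precedes it below -/
import Mathlib

section
/- Let ν = 1 + τ_c/(μ₂ K) with τ_c, μ₂, K > 0, and let x = W(νe) − 1 where W is the principal branch of the Lambert W function. Then ζ* = μ₂(ν/W(νe) − 1) satisfies (x+1)e^{x+1} = eν with x = (τ_c/K − ζ*)/(μ₂ + ζ*), and ζ* is the unique stationary point in (0, τ_c/K) of R(ζ) = (1 − ζK/τ_c)·ln(1 + ζ/μ₂). -/
/-- Derivative of the rate function. -/
lemma stmt_11_hasDeriv (K τc μ₂ : ℝ) (z : ℝ) (hz : (0:ℝ) < 1 + z / μ₂) :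
    HasDerivAt (fun z : ℝ => (1 - z * K / τc) * Real.log (1 + z / μ₂))
      (-(K / τc) * Real.log (1 + z / μ₂)
        + (1 - z * K / τc) * ((1 + z / μ₂)⁻¹ * (1 / μ₂))) z := by
  have h1 : HasDerivAt (fun z : ℝ => z * K / τc) (K / τc) z := by
    simpa [mul_div_assoc] using (hasDerivAt_id z).mul_const (K / τc)
  have hg : HasDerivAt (fun z : ℝ => 1 - z * K / τc) (-(K / τc)) z := by
    exact ((hasDerivAt_const z (1:ℝ)).sub h1).congr_deriv (by ring)
  have hinner : HasDerivAt (fun z : ℝ => 1 + z / μ₂) (1 / μ₂) z := by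
    simpa [one_div] using ((hasDerivAt_id z).div_const μ₂).const_add (1:ℝ)
  have hlog : HasDerivAt (fun z : ℝ => Real.log (1 + z / μ₂))
      ((1 + z / μ₂)⁻¹ * (1 / μ₂)) z :=
    (hinner.log hz.ne').congr_deriv (by ring)
  exact (hg.mul hlog).congr_deriv (by ring)

/-- With `ν = 1 + τ_c/(μ₂ K)` and `w = W(νe)` the principal Lambert-W value
(characterized by `w e^w = νe` and `w ≥ -1`), the point
`ζ* = μ₂(ν/w - 1)` satisfies `(x+1)e^{x+1} = eν` with
`x = (τ_c/K - ζ*)/(μ₂ + ζ*)`, and `ζ*` is the unique stationary point of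
`R(ζ) = (1 - ζK/τ_c) ln(1 + ζ/μ₂)` in `(0, τ_c/K)`. -/
theorem stmt_11 (K τc μ₂ : ℝ) (hK : 0 < K) (hτ : 0 < τc) (hμ₂ : 0 < μ₂)
    (ν w : ℝ) (hν : ν = 1 + τc / (μ₂ * K))
    (hW : w * Real.exp w = ν * Real.exp 1) (hw : -1 ≤ w)
    (ζstar x : ℝ) (hζstar : ζstar = μ₂ * (ν / w - 1))
    (hx : x = w - 1) :
    x = (τc / K - ζstar) / (μ₂ + ζstar) ∧
    (x + 1) * Real.exp (x + 1) = Real.exp 1 * ν ∧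
    ζstar ∈ Set.Ioo 0 (τc / K) ∧
    deriv (fun z : ℝ => (1 - z * K / τc) * Real.log (1 + z / μ₂)) ζstar = 0 ∧
    ∀ ζ ∈ Set.Ioo 0 (τc / K),
      deriv (fun z : ℝ => (1 - z * K / τc) * Real.log (1 + z / μ₂)) ζ = 0 →
        ζ = ζstar := by
  have hMK : 0 < μ₂ * K := mul_pos hμ₂ hK
  have hν1 : 1 < ν := by
    rw [hν]; have := div_pos hτ hMK; linarith
  have hνpos : 0 < ν := by linarith
  have hτcK : τc / K = μ₂ * (ν - 1) := by
    rw [hν]; field_simp; ring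
  -- w > 1
  have hw1 : 1 < w := by
    by_contra h
    push_neg at h
    have he : Real.exp 1 < ν * Real.exp 1 := by
      nlinarith [Real.exp_pos 1]
    rcases le_or_gt w 0 with h0 | h0
    · nlinarith [Real.exp_pos w, Real.exp_pos 1]
    · have : w * Real.exp w ≤ 1 * Real.exp 1 :=
        mul_le_mul h (Real.exp_le_exp.2 h) (Real.exp_pos w).le zero_le_one
      nlinarith
  have hw0 : 0 < w := by linarith
  -- w < ν
  have hwν : w < ν := by
    by_contra h
    push_neg at h
    have h1 : Real.exp ν ≤ Real.exp w := Real.exp_le_exp.2 h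
    have h2 : Real.exp 1 < Real.exp ν := Real.exp_lt_exp.2 hν1
    nlinarith [Real.exp_pos w]
  -- ζstar bounds
  have hζpos : 0 < ζstar := by
    rw [hζstar]
    have : 1 < ν / w := (one_lt_div hw0).2 hwν
    nlinarith
  have hζlt : ζstar < τc / K := by
    rw [hζstar, hτcK]
    have : ν / w < ν := div_lt_self hνpos hw1
    nlinarith
  -- key algebraic identity
  have hden : 0 < μ₂ + ζstar := by linarith
  have hkey : τc / K - ζstar = (w - 1) * (μ₂ + ζstar) := by
    rw [hζstar, hτcK]
    field_simp
    ring
  have hxeq : x = (τc / K - ζstar) / (μ₂ + ζstar) := by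
    rw [hkey, hx, mul_div_assoc, div_self hden.ne', mul_one]
  refine ⟨hxeq, ?_, ⟨hζpos, hζlt⟩, ?_, ?_⟩
  · rw [hx]
    simpa [sub_add_cancel, mul_comm] using hW
  · -- derivative at ζstar is zero
    have hz : (0:ℝ) < 1 + ζstar / μ₂ := by positivity
    have hexp : Real.exp (w - 1) = ν / w := by
      have hE : Real.exp w = ν * Real.exp 1 / w := by
        field_simp at hW ⊢; linarith [hW]
      rw [Real.exp_sub, hE]
      field_simp [Real.exp_ne_zero]
    have hval : 1 + ζstar / μ₂ = ν / w := by
      rw [hζstar]; field_simp; ring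
    have hlog : Real.log (1 + ζstar / μ₂) = w - 1 := by
      rw [hval, ← hexp, Real.log_exp]
    rw [(stmt_11_hasDeriv K τc μ₂ ζstar hz).deriv, hlog]
    have h1 : 1 - ζstar * K / τc = (K / τc) * (τc / K - ζstar) := by
      field_simp
    have hkey2 : w * ζstar = μ₂ * ν - μ₂ * w := by
      rw [hζstar]; field_simp
    rw [h1, hkey, hval]
    field_simp
    linear_combination K * (w - 1) * hkey2
  · -- uniqueness
    intro ζ hζ hd
    obtain ⟨hζ0, hζA⟩ := hζ
    have hz : (0:ℝ) < 1 + ζ / μ₂ := by positivity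
    have hmz : 0 < μ₂ + ζ := by linarith
    rw [(stmt_11_hasDeriv K τc μ₂ ζ hz).deriv] at hd
    obtain ⟨u, hu⟩ : ∃ u : ℝ, u = (τc / K - ζ) / (μ₂ + ζ) := ⟨_, rfl⟩
    have hupos : 0 < u := hu ▸ div_pos (by linarith) hmz
    have hlogu : Real.log (1 + ζ / μ₂) = u := by
      rw [hu]
      field_simp at hd
      have hargs : (1:ℝ) + ζ / μ₂ = (μ₂ + ζ) / μ₂ := by field_simp
      rw [hargs, eq_div_iff hmz.ne']
      have h3 : K * μ₂ * τc * (Real.log ((μ₂ + ζ) / μ₂) * (μ₂ + ζ))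
          = K * μ₂ * τc * (τc / K - ζ) := by
        field_simp
        linear_combination -hd
      exact mul_left_cancel₀ (by positivity) h3
    have hexpu : Real.exp u = 1 + ζ / μ₂ := by
      rw [← hlogu, Real.exp_log hz]
    have hu1 : u + 1 = μ₂ * ν / (μ₂ + ζ) := by
      rw [hu, hτcK]
      field_simp
      ring
    have heq : (u + 1) * Real.exp (u + 1) = ν * Real.exp 1 := by
      rw [Real.exp_add, hexpu, hu1]
      field_simp
    have huw : u + 1 = w := by
      rcases lt_trichotomy (u + 1) w with h | h | h
      · exfalso
        have : (u + 1) * Real.exp (u + 1) < w * Real.exp w :=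
          mul_lt_mul'' h (Real.exp_lt_exp.2 h) (by linarith) (Real.exp_pos _).le
        rw [heq, hW] at this; exact lt_irrefl _ this
      · exact h
      · exfalso
        have : w * Real.exp w < (u + 1) * Real.exp (u + 1) :=
          mul_lt_mul'' h (Real.exp_lt_exp.2 h) (by linarith) (Real.exp_pos _).le
        rw [heq, hW] at this; exact lt_irrefl _ this
    have hueq : u * (μ₂ + ζ) = τc / K - ζ := by
      rw [hu]; field_simp
    have hu' : u = w - 1 := by linarith
    rw [hu'] at hueq
    -- (w-1)(μ₂+ζ) = τc/K - ζ  and  (w-1)(μ₂+ζstar) = τc/K - ζstar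
    have : w * ζ = w * ζstar := by linear_combination hueq + hkey
    exact mul_left_cancel₀ hw0.ne' this
end

section
/- The substitution x = (τ_c/K − ζ)/(μ₂ + ζ) transforms the stationarity condition −(K/τ_c)·ln(1 + ζ/μ₂) + (1 − ζK/τ_c)/(μ₂(1 + ζ/μ₂)) = 0 into the equation (x+1)e^{x+1} = e(τ_c/(Kμ₂) + 1), for 0 < ζ < τ_c/K and K, τ_c, μ₂ > 0. -/
/-- The substitution `x = (τ_c/K - ζ)/(μ₂ + ζ)` transforms the stationarity
condition of `R` into the Lambert-type equation `(x+1)e^{x+1} = e(τ_c/(Kμ₂)+1)`. -/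
theorem stmt_12 (K τc μ₂ : ℝ) (hK : 0 < K) (hτ : 0 < τc) (hμ₂ : 0 < μ₂)
    (ζ x : ℝ) (hζ : 0 < ζ) (hζ' : ζ < τc / K)
    (hx : x = (τc / K - ζ) / (μ₂ + ζ)) :
    (-(K / τc) * Real.log (1 + ζ / μ₂)
        + (1 - ζ * K / τc) / (μ₂ * (1 + ζ / μ₂)) = 0) ↔
    (x + 1) * Real.exp (x + 1) = Real.exp 1 * (τc / (K * μ₂) + 1) := by
  have hμζ : (0:ℝ) < μ₂ + ζ := by linarith
  have h1pos : (0:ℝ) < 1 + ζ / μ₂ := by positivity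
  set L := Real.log (1 + ζ / μ₂) with hL
  have hlog : Real.exp L = 1 + ζ / μ₂ := Real.exp_log h1pos
  have hx1 : x + 1 = (τc / K + μ₂) / (μ₂ + ζ) := by
    rw [hx]; field_simp; ring
  have hx1pos : 0 < x + 1 := by
    rw [hx1]
    have : 0 < τc / K := div_pos hτ hK
    positivity
  have factored : -(K / τc) * L + (1 - ζ * K / τc) / (μ₂ * (1 + ζ / μ₂))
      = (K / τc) * ((τc / K - ζ) / (μ₂ + ζ) - L) := by
    rw [show μ₂ * (1 + ζ / μ₂) = μ₂ + ζ by field_simp]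
    field_simp
    ring
  have left_iff : (-(K / τc) * L + (1 - ζ * K / τc) / (μ₂ * (1 + ζ / μ₂)) = 0)
      ↔ x = L := by
    rw [factored, mul_eq_zero]
    have hKτ : K / τc ≠ 0 := (div_pos hK hτ).ne'
    constructor
    · rintro (h | h)
      · exact absurd h hKτ
      · rw [hx]; linarith [sub_eq_zero.mp h]
    · intro h
      right
      rw [← hx, h, sub_self]
  have right_iff : ((x + 1) * Real.exp (x + 1) = Real.exp 1 * (τc / (K * μ₂) + 1))
      ↔ x = L := by
    have hexp : Real.exp (x + 1) = Real.exp x * Real.exp 1 := by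
      rw [Real.exp_add]
    have hrhs : τc / (K * μ₂) + 1 = (x + 1) * ((μ₂ + ζ) / μ₂) := by
      rw [hx1]; field_simp
    constructor
    · intro h
      rw [hexp, hrhs] at h
      have he : (0:ℝ) < Real.exp 1 := Real.exp_pos 1
      have h2 : (x + 1) * Real.exp x = (x + 1) * ((μ₂ + ζ) / μ₂) := by
        apply mul_right_cancel₀ he.ne'
        calc (x + 1) * Real.exp x * Real.exp 1
              = (x + 1) * (Real.exp x * Real.exp 1) := by ring
            _ = Real.exp 1 * ((x + 1) * ((μ₂ + ζ) / μ₂)) := h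
            _ = (x + 1) * ((μ₂ + ζ) / μ₂) * Real.exp 1 := by ring
      have h3 : Real.exp x = (μ₂ + ζ) / μ₂ :=
        mul_left_cancel₀ hx1pos.ne' h2
      have h4 : Real.exp x = 1 + ζ / μ₂ := by
        rw [h3]; field_simp
      rw [hL, ← h4, Real.log_exp]
    · intro h
      rw [hexp, hrhs, h, hlog]
      have : (1:ℝ) + ζ / μ₂ = (μ₂ + ζ) / μ₂ := by field_simp
      rw [this]; ring
  rw [left_iff, right_iff]
end
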